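/- Let r_1 be the linear involution of P^3 swapping x_0<->x_1 and x_2<->x_3, and let r_2 be the quadratic Cremona map [x_0:x_1:x_2:x_3] -> [(x_1-x_0)(x_2-x_0) : x_1(x_2-x_0) : x_2(x_1-x_0) : x_1 x_2 - x_0 x_3]. Then the braid relation r_1 r_2 r_1 = r_2 r_1 r_2 holds as an identity of rational maps of P^3. -/

import Mathlib

/-! Both sides are computed explicitly: the degree-4 map r₂ r₁ r₂ is the quadratic map r₁ r₂ r₁
multiplied by the common factor x₀ (x₂ - x₀), so the two agree as rational maps. -/

open MvPolynomial

/-- The coordinate polynomials of the quadratic Cremona transformation `r₂` of `ℙ³`. -/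
noncomputable def r2poly : Fin 4 → MvPolynomial (Fin 4) ℂ :=
  ![(X 1 - X 0) * (X 2 - X 0), X 1 * (X 2 - X 0), X 2 * (X 1 - X 0),
    X 1 * X 2 - X 0 * X 3]

/-- The coordinate polynomials of the linear involution `r₁` of `ℙ³`,
swapping `x₀ ↔ x₁` and `x₂ ↔ x₃`. -/
noncomputable def r1poly : Fin 4 → MvPolynomial (Fin 4) ℂ :=
  ![X 1, X 0, X 3, X 2]

/-- Composition of rational self-maps of `ℙ³` given by coordinate polynomial tuples:
`rcomp f g` is the coordinate tuple of `f ∘ g`. -/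
noncomputable def rcomp (f g : Fin 4 → MvPolynomial (Fin 4) ℂ) :
    Fin 4 → MvPolynomial (Fin 4) ℂ :=
  fun i => MvPolynomial.bind₁ g (f i)

lemma MvPolynomial.X_sub_X_ne_zero {R σ : Type*} [CommRing R] [Nontrivial R] {i j : σ}
    (h : i ≠ j) : (X i - X j : MvPolynomial σ R) ≠ 0 :=
  sub_ne_zero.mpr ((X_injective (R := R)).ne h)

lemma rcomp_r1poly_rcomp_r2poly_r1poly :
    rcomp r1poly (rcomp r2poly r1poly) =
      ![X 0 * (X 3 - X 1), (X 0 - X 1) * (X 3 - X 1), X 0 * X 3 - X 1 * X 2,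
        X 3 * (X 0 - X 1)] := by
  funext i
  fin_cases i <;> simp [rcomp, r1poly, r2poly]

lemma rcomp_r2poly_rcomp_r1poly_r2poly :
    rcomp r2poly (rcomp r1poly r2poly) =
      fun i => X 0 * (X 2 - X 0) * rcomp r1poly (rcomp r2poly r1poly) i := by
  rw [rcomp_r1poly_rcomp_r2poly_r1poly]
  funext i
  fin_cases i <;> simp [rcomp, r1poly, r2poly] <;> ring

/-- The braid relation `r₁ r₂ r₁ = r₂ r₁ r₂` as an identity of rational maps of `ℙ³`:
the coordinate polynomials of the two triple compositions agree up to common nonzero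
polynomial scalar factors. -/
theorem stmt_5 :
    ∃ c d : MvPolynomial (Fin 4) ℂ, c ≠ 0 ∧ d ≠ 0 ∧
      ∀ i : Fin 4,
        c * rcomp r1poly (rcomp r2poly r1poly) i
          = d * rcomp r2poly (rcomp r1poly r2poly) i :=
  ⟨X 0 * (X 2 - X 0), 1, mul_ne_zero (X_ne_zero 0) (X_sub_X_ne_zero (by decide)), one_ne_zero,
    fun i => by rw [rcomp_r2poly_rcomp_r1poly_r2poly, one_mul]⟩
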